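/- Let S be an inverse semigroup and let η : S → S be an ordered function (a ≤ b implies η(a) ≤ η(b)) that preserves the heap operation, i.e. η(a*b⁻¹*c) = η(a)*(η(b))⁻¹*η(c) for all a, b, c ∈ S. Then the function φ : S → S defined by φ(a) = η(a)*(η(a⁻¹*a))⁻¹ is an ordered premorphism of S. -/

import Mathlib

/-- An inverse semigroup: a semigroup in which every element `a` has a
(unique) inverse `a⁻¹` with `a * a⁻¹ * a = a` and `a⁻¹ * a * a⁻¹ = a⁻¹`. -/
class InverseSemigroup (S : Type*) extends Semigroup S, Inv S where
  mul_inv_mul : ∀ a : S, a * a⁻¹ * a = a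
  inv_mul_inv : ∀ a : S, a⁻¹ * a * a⁻¹ = a⁻¹
  inv_unique : ∀ a b : S, a * b * a = a → b * a * b = b → b = a⁻¹

/-- The natural partial order on an inverse semigroup:
`a ≤ b` iff `a = e * b` for some idempotent `e`. -/
def npo {S : Type*} [InverseSemigroup S] (a b : S) : Prop :=
  ∃ e : S, e * e = e ∧ a = e * b

/-- A premorphism of inverse semigroups: `θ (a * b) ≤ θ a * θ b` in the
natural partial order of the codomain. -/
def IsPremorphism {S T : Type*} [InverseSemigroup S] [InverseSemigroup T]
    (θ : S → T) : Prop :=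
  ∀ a b : S, npo (θ (a * b)) (θ a * θ b)

/-!
Taking `a⁻¹ * a` as the middle argument of the heap operation gives
`η (a * b) = η a * (η (a⁻¹ * a))⁻¹ * η b`, hence `φ a * φ b = η (a * b) * (η (b⁻¹ * b))⁻¹`.
Since `(a * b)⁻¹ * (a * b) ≤ b⁻¹ * b`, and `≤` is compatible with `η`, inversion and
multiplication, this dominates `φ (a * b) = η (a * b) * (η ((a * b)⁻¹ * (a * b)))⁻¹`.
The same compatibilities show that `φ` is ordered.
-/

namespace InverseSemigroup

variable {S : Type*} [InverseSemigroup S]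

protected theorem inv_inv (a : S) : a⁻¹⁻¹ = a :=
  (inv_unique a⁻¹ a (inv_mul_inv a) (mul_inv_mul a)).symm

theorem isIdempotentElem_inv_mul (a : S) : IsIdempotentElem (a⁻¹ * a) := by
  rw [IsIdempotentElem, ← mul_assoc, inv_mul_inv]

theorem isIdempotentElem_mul_inv (a : S) : IsIdempotentElem (a * a⁻¹) := by
  rw [IsIdempotentElem, ← mul_assoc, mul_inv_mul]

theorem inv_eq_self_of_isIdempotentElem {e : S} (he : IsIdempotentElem e) : e⁻¹ = e :=
  (inv_unique e e (by rw [he, he]) (by rw [he, he])).symm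

theorem mul_mul_of_isIdempotentElem {e : S} (he : IsIdempotentElem e) (x : S) :
    e * (e * x) = e * x := by
  rw [← mul_assoc, he.eq]

theorem isIdempotentElem_mul {e f : S} (he : IsIdempotentElem e) (hf : IsIdempotentElem f) :
    IsIdempotentElem (e * f) := by
  -- `f * (e * f)⁻¹ * e` is another inverse of `e * f`, so it equals `(e * f)⁻¹`,
  -- which is then idempotent, hence its own inverse.
  have hx : f * (e * f)⁻¹ * e = (e * f)⁻¹ := by
    refine inv_unique (e * f) _ ?_ ?_
    · calc e * f * (f * (e * f)⁻¹ * e) * (e * f) = e * f * (e * f)⁻¹ * (e * f) := by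
            simp only [mul_assoc, mul_mul_of_isIdempotentElem he,
              mul_mul_of_isIdempotentElem hf]
        _ = e * f := mul_inv_mul _
    · calc f * (e * f)⁻¹ * e * (e * f) * (f * (e * f)⁻¹ * e)
            = f * ((e * f)⁻¹ * (e * f) * (e * f)⁻¹) * e := by
            simp only [mul_assoc, mul_mul_of_isIdempotentElem he,
              mul_mul_of_isIdempotentElem hf]
        _ = f * (e * f)⁻¹ * e := by rw [inv_mul_inv]
  have hxx : IsIdempotentElem (e * f)⁻¹ := by
    calc (e * f)⁻¹ * (e * f)⁻¹ = (f * (e * f)⁻¹ * e) * (f * (e * f)⁻¹ * e) := by rw [hx]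
      _ = f * ((e * f)⁻¹ * (e * f) * (e * f)⁻¹) * e := by simp only [mul_assoc]
      _ = (e * f)⁻¹ := by rw [inv_mul_inv, hx]
  have h := inv_eq_self_of_isIdempotentElem hxx
  rw [InverseSemigroup.inv_inv] at h
  rwa [h]

theorem mul_comm_of_isIdempotentElem {e f : S} (he : IsIdempotentElem e)
    (hf : IsIdempotentElem f) : e * f = f * e := by
  have hef := isIdempotentElem_mul he hf
  have hfe := isIdempotentElem_mul hf he
  -- `f * e` is an inverse of the idempotent `e * f`, which is its own inverse.
  have h : f * e = (e * f)⁻¹ := by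
    refine inv_unique (e * f) (f * e) ?_ ?_
    · calc e * f * (f * e) * (e * f) = (e * f) * (e * f) := by
            simp only [mul_assoc, mul_mul_of_isIdempotentElem he,
              mul_mul_of_isIdempotentElem hf]
        _ = e * f := hef.eq
    · calc f * e * (e * f) * (f * e) = (f * e) * (f * e) := by
            simp only [mul_assoc, mul_mul_of_isIdempotentElem he,
              mul_mul_of_isIdempotentElem hf]
        _ = f * e := hfe.eq
  rw [h, inv_eq_self_of_isIdempotentElem hef]

protected theorem mul_inv_rev (a b : S) : (a * b)⁻¹ = b⁻¹ * a⁻¹ := by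
  have hcomm := mul_comm_of_isIdempotentElem (isIdempotentElem_mul_inv b)
    (isIdempotentElem_inv_mul a)
  refine (inv_unique (a * b) (b⁻¹ * a⁻¹) ?_ ?_).symm
  · calc a * b * (b⁻¹ * a⁻¹) * (a * b) = a * (b * b⁻¹ * (a⁻¹ * a)) * b := by
          simp only [mul_assoc]
      _ = (a * a⁻¹ * a) * (b * b⁻¹ * b) := by rw [hcomm]; simp only [mul_assoc]
      _ = a * b := by rw [mul_inv_mul, mul_inv_mul]
  · calc b⁻¹ * a⁻¹ * (a * b) * (b⁻¹ * a⁻¹) = b⁻¹ * (a⁻¹ * a * (b * b⁻¹)) * a⁻¹ := by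
          simp only [mul_assoc]
      _ = (b⁻¹ * b * b⁻¹) * (a⁻¹ * a * a⁻¹) := by rw [← hcomm]; simp only [mul_assoc]
      _ = b⁻¹ * a⁻¹ := by rw [inv_mul_inv, inv_mul_inv]

theorem mul_eq_conj_mul {f : S} (hf : IsIdempotentElem f) (b : S) :
    b * f = b * f * b⁻¹ * b := by
  calc b * f = b * (b⁻¹ * b * f) := by rw [← mul_assoc, ← mul_assoc, mul_inv_mul]
    _ = b * f * b⁻¹ * b := by
        rw [mul_comm_of_isIdempotentElem (isIdempotentElem_inv_mul b) hf]
        simp only [mul_assoc]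

theorem isIdempotentElem_conj {f : S} (hf : IsIdempotentElem f) (b : S) :
    IsIdempotentElem (b * f * b⁻¹) := by
  calc b * f * b⁻¹ * (b * f * b⁻¹) = b * f * b⁻¹ * b * f * b⁻¹ := by simp only [mul_assoc]
    _ = b * f * b⁻¹ := by rw [← mul_eq_conj_mul hf, mul_assoc b f f, hf.eq]

end InverseSemigroup

open InverseSemigroup

namespace npo

variable {S : Type*} [InverseSemigroup S]

theorem refl (a : S) : npo a a :=
  ⟨a * a⁻¹, isIdempotentElem_mul_inv a, (mul_inv_mul a).symm⟩

theorem of_eq_mul {a b f : S} (hf : IsIdempotentElem f) (h : a = b * f) : npo a b :=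
  ⟨b * f * b⁻¹, isIdempotentElem_conj hf b, h.trans (mul_eq_conj_mul hf b)⟩

theorem inv {a b : S} (h : npo a b) : npo a⁻¹ b⁻¹ := by
  obtain ⟨e, he, rfl⟩ := h
  exact of_eq_mul he (by rw [InverseSemigroup.mul_inv_rev, inv_eq_self_of_isIdempotentElem he])

theorem mul {a b c d : S} (hab : npo a b) (hcd : npo c d) : npo (a * c) (b * d) := by
  obtain ⟨e, he, rfl⟩ := hab
  obtain ⟨f, hf, rfl⟩ := hcd
  refine ⟨e * (b * f * b⁻¹), isIdempotentElem_mul he (isIdempotentElem_conj hf b), ?_⟩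
  calc e * b * (f * d) = e * (b * f) * d := by simp only [mul_assoc]
    _ = e * (b * f * b⁻¹ * b) * d := by rw [← mul_eq_conj_mul hf b]
    _ = e * (b * f * b⁻¹) * (b * d) := by simp only [mul_assoc]

end npo

theorem npo_inv_mul_self_mul {S : Type*} [InverseSemigroup S] (a b : S) :
    npo ((a * b)⁻¹ * (a * b)) (b⁻¹ * b) := by
  have h : (a * b)⁻¹ * (a * b) = b⁻¹ * (a⁻¹ * a * b) := by
    rw [InverseSemigroup.mul_inv_rev]; simp only [mul_assoc]
  rw [h]
  exact (npo.refl b⁻¹).mul ⟨a⁻¹ * a, isIdempotentElem_inv_mul a, rfl⟩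

theorem heap_hom_mul_eq {S : Type*} [InverseSemigroup S] {η : S → S}
    (hheap : ∀ a b c : S, η (a * b⁻¹ * c) = η a * (η b)⁻¹ * η c) (a b : S) :
    η a * (η (a⁻¹ * a))⁻¹ * η b = η (a * b) := by
  rw [← hheap, inv_eq_self_of_isIdempotentElem (isIdempotentElem_inv_mul a), ← mul_assoc a,
    mul_inv_mul]

theorem heap_preserving_gives_premorphism {S : Type*} [InverseSemigroup S]
    (η : S → S)
    (hord : ∀ a b : S, npo a b → npo (η a) (η b))
    (hheap : ∀ a b c : S, η (a * b⁻¹ * c) = η a * (η b)⁻¹ * η c) :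
    (∀ a b : S, npo a b →
        npo (η a * (η (a⁻¹ * a))⁻¹) (η b * (η (b⁻¹ * b))⁻¹)) ∧
      IsPremorphism (fun a => η a * (η (a⁻¹ * a))⁻¹) := by
  refine ⟨fun a b h => (hord _ _ h).mul (hord _ _ (h.inv.mul h)).inv, fun a b => ?_⟩
  show npo (η (a * b) * (η ((a * b)⁻¹ * (a * b)))⁻¹)
    (η a * (η (a⁻¹ * a))⁻¹ * (η b * (η (b⁻¹ * b))⁻¹))
  rw [← mul_assoc (η a * (η (a⁻¹ * a))⁻¹), heap_hom_mul_eq hheap]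
  exact (npo.refl _).mul (hord _ _ (npo_inv_mul_self_mul a b)).inv
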